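/- Let r ≥ 3 be an integer and let k be an integer with 2 ≤ k ≤ r−1. Set γ_{r−1} = (1/2)(ε_{r−1,1} + ε_{r,2}). Then Tr( [f, L_{r−k+1}] · [γ_{r−1}, L_k] ) = 2(r−k)(k−1). -/

import Mathlib

open Matrix

/-- The nilpotent element `f = Σ_{i=1}^{r−1} i(r−i) ε_{i+1,i}` (0-based indexing). -/
noncomputable def fMat (r : ℕ) : Matrix (Fin r) (Fin r) ℂ :=
  Matrix.of fun a b =>
    if (b : ℕ) + 1 = (a : ℕ) then (((b : ℕ) : ℂ) + 1) * ((r : ℂ) - (((b : ℕ) : ℂ) + 1)) else 0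

/-- `L_i = Σ_{k=1}^{r−i+1} ε_{k,i−1+k}` (1-based `i`). -/
noncomputable def LMat (r i : ℕ) : Matrix (Fin r) (Fin r) ℂ :=
  Matrix.of fun a b => if (b : ℕ) = (a : ℕ) + (i - 1) then 1 else 0

/-- `γ_{r−1} = (1/2)(ε_{r−1,1} + ε_{r,2})` (1-based indices). -/
noncomputable def gammaRm1 (r : ℕ) : Matrix (Fin r) (Fin r) ℂ :=
  Matrix.of fun a b =>
    if ((a : ℕ) = r - 2 ∧ (b : ℕ) = 0) ∨ ((a : ℕ) = r - 1 ∧ (b : ℕ) = 1) then (1 / 2 : ℂ)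
    else 0

/-! Write `fCoeff r t = t (r - t)`, so that the entry of `f` at `(b + 1, b)` is `fCoeff r (b + 1)`.
Since `fCoeff r` vanishes at `0` and at `r`, the commutator `[f, L_m]` is supported on the
diagonal `b + 1 = a + (m - 1)`, with entry `fCoeff r a - fCoeff r (b + 1)` there and no boundary
cases. On the other side `[γ_{r-1}, L_k]` is a combination of four matrix units, so the trace
picks out four entries of `[f, L_{r-k+1}]`; by the symmetry `fCoeff r t = fCoeff r (r - t)` it
equals `fCoeff r (k - 1) + fCoeff r k - fCoeff r 1 = 2 (r - k) (k - 1)`. -/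

def fCoeff (r t : ℕ) : ℂ := (t : ℂ) * ((r : ℂ) - t)

lemma fCoeff_zero (r : ℕ) : fCoeff r 0 = 0 := by simp [fCoeff]

lemma fCoeff_self (r : ℕ) : fCoeff r r = 0 := by simp [fCoeff]

section

variable {r : ℕ}

lemma fMat_apply (a b : Fin r) :
    fMat r a b = if (b : ℕ) + 1 = a then fCoeff r a else 0 := by
  simp only [fMat, of_apply, fCoeff]
  split_ifs with h
  · rw [← h]; push_cast; rfl
  · rfl

lemma fMat_mul_LMat_apply (m : ℕ) (a b : Fin r) :
    (fMat r * LMat r m) a b = if (b : ℕ) + 1 = a + (m - 1) then fCoeff r a else 0 := by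
  rw [mul_apply]
  split_ifs with h
  · rcases Nat.eq_zero_or_pos (a : ℕ) with ha | ha
    · rw [ha, fCoeff_zero]
      refine Finset.sum_eq_zero fun c _ => ?_
      simp [fMat_apply, ha]
    · rw [Finset.sum_eq_single ⟨a - 1, by omega⟩]
      · simp only [fMat_apply, LMat, of_apply]
        split_ifs <;> first | omega | simp
      · intro c _ hc
        have : (c : ℕ) ≠ a - 1 := fun h' => hc (Fin.ext h')
        simp only [fMat_apply, LMat, of_apply]
        split_ifs <;> first | omega | simp
      · simp
  · refine Finset.sum_eq_zero fun c _ => ?_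
    simp only [fMat_apply, LMat, of_apply]
    split_ifs <;> first | omega | simp

lemma LMat_mul_fMat_apply (m : ℕ) (a b : Fin r) :
    (LMat r m * fMat r) a b = if (b : ℕ) + 1 = a + (m - 1) then fCoeff r (b + 1) else 0 := by
  rw [mul_apply]
  split_ifs with h
  · rcases Nat.lt_or_ge ((b : ℕ) + 1) r with hb | hb
    · rw [Finset.sum_eq_single ⟨b + 1, hb⟩]
      · simp only [fMat_apply, LMat, of_apply]
        simp [h]
      · intro c _ hc
        have : (c : ℕ) ≠ b + 1 := fun h' => hc (Fin.ext h')
        simp only [fMat_apply, LMat, of_apply]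
        split_ifs <;> first | omega | simp
      · simp
    · rw [show (b : ℕ) + 1 = r by omega, fCoeff_self]
      refine Finset.sum_eq_zero fun c _ => ?_
      simp only [fMat_apply, LMat, of_apply]
      split_ifs <;> first | omega | simp
  · refine Finset.sum_eq_zero fun c _ => ?_
    simp only [fMat_apply, LMat, of_apply]
    split_ifs <;> first | omega | simp

lemma fMat_mul_LMat_sub_LMat_mul_fMat_apply (m : ℕ) (a b : Fin r) :
    (fMat r * LMat r m - LMat r m * fMat r) a b =
      if (b : ℕ) + 1 = a + (m - 1) then fCoeff r a - fCoeff r (b + 1) else 0 := by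
  rw [Matrix.sub_apply, fMat_mul_LMat_apply, LMat_mul_fMat_apply]
  split_ifs <;> simp

lemma single_mul_LMat (m : ℕ) (i j j' : Fin r) (c : ℂ) (h : (j' : ℕ) = j + (m - 1)) :
    single i j c * LMat r m = single i j' c := by
  ext a b
  rw [mul_apply, Finset.sum_eq_single j (fun d _ hd => by simp [single, Ne.symm hd]) (by simp)]
  simp only [single, LMat, of_apply, Fin.ext_iff, and_true]
  split_ifs <;> first | omega | simp

lemma LMat_mul_single (m : ℕ) (i i' j : Fin r) (c : ℂ) (h : (i : ℕ) = i' + (m - 1)) :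
    LMat r m * single i j c = single i' j c := by
  ext a b
  rw [mul_apply, Finset.sum_eq_single i (fun d _ hd => by simp [single, Ne.symm hd]) (by simp)]
  simp only [single, LMat, of_apply, Fin.ext_iff, true_and]
  split_ifs <;> first | omega | simp

lemma gammaRm1_eq (hr : 2 ≤ r) :
    gammaRm1 r = single ⟨r - 2, by omega⟩ ⟨0, by omega⟩ (1 / 2) +
      single ⟨r - 1, by omega⟩ ⟨1, by omega⟩ (1 / 2) := by
  ext a b
  simp only [gammaRm1, of_apply, Matrix.add_apply, single, Fin.ext_iff]
  split_ifs <;> first | omega | simp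

lemma gammaRm1_mul_LMat_sub_LMat_mul_gammaRm1 {k : ℕ} (hk1 : 1 ≤ k) (hk : k < r) :
    gammaRm1 r * LMat r k - LMat r k * gammaRm1 r =
      single ⟨r - 2, by omega⟩ ⟨k - 1, by omega⟩ (1 / 2)
        + single ⟨r - 1, by omega⟩ ⟨k, hk⟩ (1 / 2)
        - single ⟨r - (k + 1), by omega⟩ ⟨0, by omega⟩ (1 / 2)
        - single ⟨r - k, by omega⟩ ⟨1, by omega⟩ (1 / 2) := by
  rw [gammaRm1_eq (by omega), add_mul, mul_add,
    single_mul_LMat k _ _ ⟨k - 1, by omega⟩ _ (by simp),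
    single_mul_LMat k _ _ ⟨k, hk⟩ _ (by simp; omega),
    LMat_mul_single k _ ⟨r - (k + 1), by omega⟩ _ _ (by simp; omega),
    LMat_mul_single k _ ⟨r - k, by omega⟩ _ _ (by simp; omega)]
  abel

end

theorem antidiagonal_trace_identity_general (r k : ℕ) (hk2 : 2 ≤ k) (hk : k ≤ r - 1) :
    ((fMat r * LMat r (r - k + 1) - LMat r (r - k + 1) * fMat r) *
        (gammaRm1 r * LMat r k - LMat r k * gammaRm1 r)).trace =
      2 * ((r : ℂ) - (k : ℂ)) * ((k : ℂ) - 1) := by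
  rw [gammaRm1_mul_LMat_sub_LMat_mul_gammaRm1 (by omega) (by omega)]
  simp only [Matrix.mul_add, Matrix.mul_sub, trace_add, trace_sub, trace_mul_single,
    op_smul_eq_mul, fMat_mul_LMat_sub_LMat_mul_fMat_apply]
  rw [if_pos (by omega), if_pos (by omega), if_pos (by omega), if_pos (by omega)]
  simp only [fCoeff]
  obtain ⟨hk1, hkr, hr2⟩ : 1 ≤ k ∧ k < r ∧ 2 ≤ r := by omega
  push_cast [Nat.cast_sub hk1, Nat.cast_sub hkr, Nat.cast_sub hkr.le, Nat.cast_sub hr2,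
    Nat.cast_sub (hk1.trans hkr.le)]
  ring

/-- for `2 ≤ k ≤ r−1`,
`Tr([f, L_{r−k+1}]·[γ_{r−1}, L_k]) = 2(r−k)(k−1)`. -/
theorem antidiagonal_trace_identity (r k : ℕ) (hr : 3 ≤ r) (hk2 : 2 ≤ k) (hk : k ≤ r - 1) :
    ((fMat r * LMat r (r - k + 1) - LMat r (r - k + 1) * fMat r) *
        (gammaRm1 r * LMat r k - LMat r k * gammaRm1 r)).trace =
      2 * ((r : ℂ) - (k : ℂ)) * ((k : ℂ) - 1) :=
  antidiagonal_trace_identity_general r k hk2 hk
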